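/- arXiv:2105.14339 — 2 statements merged into one kernel-verified Lean document; each statement's English description precedes it below -/
import Mathlib

section
/- Let G be a finite simple graph containing adjacent vertices x and y where y has degree 2 in G, and let d ≥ 2. Let G* be the graph obtained from G by deleting the edge {x, y}, adding d - 1 new vertices v_1, ..., v_{d-1}, and adding the edges of the path y, v_1, v_2, ..., v_{d-1}, x (so the edge {x,y} is replaced by a path of length d with new interior vertices). Then G* is well-f-covered if and only if G is well-f-covered, and in either case f(G*) = f(G) + d - 1. -/
/-- `X` induces a forest in `G`: the subgraph induced by `X` is acyclic. -/
def IsInducedForest {V : Type*} (G : SimpleGraph V) (X : Finset V) : Prop :=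
  (G.induce (X : Set V)).IsAcyclic

/-- `X` is a maximal induced forest of `G`. -/
def IsMaximalInducedForest {V : Type*} (G : SimpleGraph V) (X : Finset V) : Prop :=
  IsInducedForest G X ∧ ∀ Y : Finset V, X ⊂ Y → ¬ IsInducedForest G Y

/-- The forest number of `G`: maximum cardinality of an induced forest. -/
noncomputable def forestNum {V : Type*} (G : SimpleGraph V) : ℕ :=
  sSup {n | ∃ X : Finset V, IsInducedForest G X ∧ X.card = n}

/-- `G` is well-f-covered: all maximal induced forests have the same cardinality. -/
def WellFCovered {V : Type*} (G : SimpleGraph V) : Prop :=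
  ∀ X Y : Finset V, IsMaximalInducedForest G X → IsMaximalInducedForest G Y →
    X.card = Y.card

def IsIndepFinset {V : Type*} (G : SimpleGraph V) (X : Finset V) : Prop :=
  ∀ ⦃u⦄, u ∈ X → ∀ ⦃v⦄, v ∈ X → ¬ G.Adj u v

def IsMaximalIndepSet {V : Type*} (G : SimpleGraph V) (X : Finset V) : Prop :=
  IsIndepFinset G X ∧ ∀ Y : Finset V, X ⊂ Y → ¬ IsIndepFinset G Y

noncomputable def indepNum {V : Type*} (G : SimpleGraph V) : ℕ :=
  sSup {n | ∃ X : Finset V, IsIndepFinset G X ∧ X.card = n}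

def WellCovered {V : Type*} (G : SimpleGraph V) : Prop :=
  ∀ X Y : Finset V, IsMaximalIndepSet G X → IsMaximalIndepSet G Y → X.card = Y.card

/-- The join of two graphs on disjoint vertex sets. -/
def joinGraph {V W : Type*} (G : SimpleGraph V) (H : SimpleGraph W) :
    SimpleGraph (V ⊕ W) where
  Adj a b :=
    match a, b with
    | Sum.inl u, Sum.inl v => G.Adj u v
    | Sum.inr u, Sum.inr v => H.Adj u v
    | Sum.inl _, Sum.inr _ => True
    | Sum.inr _, Sum.inl _ => True
  symm := ⟨by rintro (u|u) (v|v) h <;> first | exact h.symm | trivial⟩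
  loopless := ⟨by rintro (u|u) h <;> exact SimpleGraph.irrefl _ h⟩

/-- The graph obtained from `G` by replacing the edge `{x, y}` by a path of length `d`
through `d - 1` new interior vertices `v_1, ..., v_{d-1}` (indexed by `Fin (d-1)`):
the edge `{x,y}` is deleted, `y` is joined to `v_1`, consecutive `v_i` are joined,
and `v_{d-1}` is joined to `x`. -/
def subdividedGraph {V : Type*} (G : SimpleGraph V) (x y : V) (d : ℕ) :
    SimpleGraph (V ⊕ Fin (d - 1)) :=
  SimpleGraph.fromRel fun a b =>
    match a, b with
    | Sum.inl u, Sum.inl v => G.Adj u v ∧ ¬((u = x ∧ v = y) ∨ (u = y ∧ v = x))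
    | Sum.inl u, Sum.inr i => (u = y ∧ (i : ℕ) = 0) ∨ (u = x ∧ (i : ℕ) = d - 2)
    | Sum.inr i, Sum.inr j => (i : ℕ) + 1 = (j : ℕ)
    | Sum.inr _, Sum.inl _ => False

/-!
Write `H_X` for the graph induced by `X` with the edge `xy` removed. Contracting the new path onto
`xy`, one path edge at a time, and cutting it at a missing interior vertex shows that `X ∪ P`
induces a forest of `G*` iff `H_X` is acyclic and, when `P` is the whole path, `x` and `y` are not
connected in `H_X`; that condition says exactly that `X` induces a forest of `G`. As `y` has only
the neighbours `x` and `z`, `H_X` is acyclic iff `X - y` induces a forest of `G`. Hence a maximal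
induced forest of `G*` is either `X ∪ path` with `X` maximal in `G`, or `X ∪ (path - vᵢ)` with
`X - y` maximal in `G`; both have `d - 1` more vertices than that maximal forest of `G`.
-/

namespace SimpleGraph

variable {α β : Type*}

theorem Reachable.lift {K : SimpleGraph α} {H : SimpleGraph β} (f : α → β)
    (hf : ∀ u v, K.Adj u v → H.Reachable (f u) (f v)) {u v : α} (h : K.Reachable u v) :
    H.Reachable (f u) (f v) := by
  rw [reachable_iff_reflTransGen] at h ⊢
  exact h.lift' f fun u v huv => (reachable_iff_reflTransGen _ _).mp (hf u v huv)

theorem isBridge_of_map {K : SimpleGraph α} {H : SimpleGraph β} (hH : H.IsAcyclic) (f : α → β)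
    {a b : α} (hab : H.Adj (f a) (f b))
    (hf : ∀ u v, (K.deleteEdges {s(a, b)}).Adj u v →
      (H.deleteEdges {s(f a, f b)}).Reachable (f u) (f v)) :
    K.IsBridge s(a, b) := fun hr =>
  isAcyclic_iff_forall_adj_isBridge.mp hH hab (hr.lift f hf)

theorem isBridge_of_cut {K : SimpleGraph α} (C : Set α) {a b : α} (hab : a ∈ C ↔ b ∉ C)
    (hC : ∀ u v, (K.deleteEdges {s(a, b)}).Adj u v → (u ∈ C ↔ v ∈ C)) :
    K.IsBridge s(a, b) := fun hr => by
  have := reachable_bot.mp <| hr.lift (H := ⊥) (· ∈ C) fun u v huv => by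
    rw [propext (hC u v huv)]
  simp only [this] at hab
  tauto

theorem reachable_of_adj_succ {K : SimpleGraph α} (f : ℕ → α) {a b : ℕ} (hab : a ≤ b)
    (h : ∀ s, a ≤ s → s < b → K.Adj (f s) (f (s + 1))) : K.Reachable (f a) (f b) := by
  rw [reachable_iff_reflTransGen]
  refine (reflTransGen_of_succ_of_le (fun s t => K.Adj (f s) (f t)) (fun s hs => ?_) hab).lift f
    fun _ _ h => h
  rw [Order.succ_eq_add_one]
  exact h s hs.1 hs.2

theorem rel_of_sym2_eq {r : α → α → Prop} (hr : ∀ a b, r a b → r b a) {u v a b : α}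
    (h : s(u, v) = s(a, b)) (hab : r a b) : r u v := by
  rcases Sym2.eq_iff.mp h with ⟨rfl, rfl⟩ | ⟨rfl, rfl⟩
  exacts [hab, hr _ _ hab]

def spanningInduce (G : SimpleGraph α) (s : Set α) : SimpleGraph α where
  Adj a b := a ∈ s ∧ b ∈ s ∧ G.Adj a b
  symm := ⟨fun _ _ ⟨ha, hb, h⟩ => ⟨hb, ha, h.symm⟩⟩
  loopless := ⟨fun _ ⟨_, _, h⟩ => G.irrefl h⟩

variable {G : SimpleGraph α} {s t : Set α}

@[simp] theorem spanningInduce_adj {a b : α} :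
    (G.spanningInduce s).Adj a b ↔ a ∈ s ∧ b ∈ s ∧ G.Adj a b := Iff.rfl

theorem spanningInduce_mono (h : s ⊆ t) : G.spanningInduce s ≤ G.spanningInduce t :=
  fun _ _ ⟨ha, hb, hab⟩ => ⟨h ha, h hb, hab⟩

theorem mem_of_reachable_of_ne {K : SimpleGraph α} (hK : K ≤ G.spanningInduce s) {u v : α}
    (h : K.Reachable u v) (huv : u ≠ v) : u ∈ s := by
  obtain ⟨_ | ⟨hadj, _⟩⟩ := h
  · exact absurd rfl huv
  · exact (hK hadj).1

theorem isAcyclic_induce_iff_spanningInduce :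
    (G.induce s).IsAcyclic ↔ (G.spanningInduce s).IsAcyclic := by
  refine ⟨fun h => isAcyclic_iff_forall_adj_isBridge.mpr fun a b hab => ?_,
    fun h => h.embedding ⟨Function.Embedding.subtype _, by simp⟩⟩
  classical
  let r : α → s := fun v => if hv : v ∈ s then ⟨v, hv⟩ else ⟨a, hab.1⟩
  have hr : ∀ v (hv : v ∈ s), r v = ⟨v, hv⟩ := fun v hv => dif_pos hv
  refine isBridge_of_map h r (by simpa [hr _ hab.1, hr _ hab.2.1] using hab.2.2) ?_
  intro u v huv
  rw [deleteEdges_adj] at huv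
  obtain ⟨⟨hu, hv, huv⟩, hne⟩ := huv
  rw [hr _ hu, hr _ hv, hr _ hab.1, hr _ hab.2.1]
  refine Adj.reachable (deleteEdges_adj.mpr ⟨by simpa using huv, ?_⟩)
  simpa [Sym2.eq_iff] using hne

end SimpleGraph

open SimpleGraph

section InducedForest

variable {V : Type*} {G : SimpleGraph V} {X Y : Finset V}

theorem isInducedForest_iff : IsInducedForest G X ↔ (G.spanningInduce X).IsAcyclic :=
  isAcyclic_induce_iff_spanningInduce

theorem IsInducedForest.mono (hY : IsInducedForest G Y) (h : X ⊆ Y) : IsInducedForest G X :=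
  isInducedForest_iff.mpr <| (isInducedForest_iff.mp hY).anti <|
    spanningInduce_mono (Finset.coe_subset.mpr h)

theorem IsMaximalInducedForest.eq_of_subset (hX : IsMaximalInducedForest G X)
    (hY : IsInducedForest G Y) (h : X ⊆ Y) : X = Y :=
  by_contra fun hne => hX.2 Y (h.ssubset_of_ne hne) hY

variable [Fintype V]

theorem bddAbove_card_isInducedForest (G : SimpleGraph V) :
    BddAbove {n | ∃ X : Finset V, IsInducedForest G X ∧ X.card = n} :=
  ⟨Fintype.card V, by rintro _ ⟨Y, -, rfl⟩; exact Finset.card_le_univ Y⟩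

theorem IsInducedForest.card_le_forestNum (h : IsInducedForest G X) : X.card ≤ forestNum G :=
  le_csSup (bddAbove_card_isInducedForest G) ⟨X, h, rfl⟩

theorem exists_isMaximalInducedForest_card_eq_forestNum (G : SimpleGraph V) :
    ∃ X, IsMaximalInducedForest G X ∧ X.card = forestNum G := by
  obtain ⟨X, hX, hcard⟩ : ∃ X, IsInducedForest G X ∧ X.card = forestNum G :=
    Nat.sSup_mem (s := {n | ∃ X : Finset V, IsInducedForest G X ∧ X.card = n})
      ⟨0, ∅, isInducedForest_iff.mpr
        (isAcyclic_bot.anti fun _ _ h => by simpa using h.1), rfl⟩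
      (bddAbove_card_isInducedForest G)
  refine ⟨X, ⟨hX, fun Y hXY hY => ?_⟩, hcard⟩
  have := hY.card_le_forestNum
  have := Finset.card_lt_card hXY
  omega

theorem wellFCovered_iff_and_forestNum_eq {W : Type*} [Fintype W] (H : SimpleGraph W) (k : ℕ)
    (hGH : ∀ X, IsMaximalInducedForest G X →
      ∃ Z, IsMaximalInducedForest H Z ∧ Z.card = X.card + k)
    (hHG : ∀ Z, IsMaximalInducedForest H Z →
      ∃ X, IsMaximalInducedForest G X ∧ Z.card = X.card + k) :
    (WellFCovered H ↔ WellFCovered G) ∧ forestNum H = forestNum G + k := by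
  refine ⟨⟨fun hH X X' hX hX' => ?_, fun hG Z Z' hZ hZ' => ?_⟩, le_antisymm ?_ ?_⟩
  · obtain ⟨Z, hZ, hc⟩ := hGH X hX
    obtain ⟨Z', hZ', hc'⟩ := hGH X' hX'
    have := hH Z Z' hZ hZ'
    omega
  · obtain ⟨X, hX, hc⟩ := hHG Z hZ
    obtain ⟨X', hX', hc'⟩ := hHG Z' hZ'
    rw [hc, hc', hG X X' hX hX']
  · obtain ⟨Z, hZ, hZc⟩ := exists_isMaximalInducedForest_card_eq_forestNum H
    obtain ⟨X, hX, hc⟩ := hHG Z hZ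
    have := hX.1.card_le_forestNum
    omega
  · obtain ⟨X, hX, hXc⟩ := exists_isMaximalInducedForest_card_eq_forestNum G
    obtain ⟨Z, hZ, hc⟩ := hGH X hX
    have := hZ.1.card_le_forestNum
    omega

end InducedForest

section DeleteEdge

variable {V : Type*} {G : SimpleGraph V} {x y z : V} {X : Finset V}

theorem isInducedForest_iff_deleteEdges (hxy : G.Adj x y) :
    IsInducedForest G X ↔ ((G.spanningInduce X).deleteEdges {s(x, y)}).IsAcyclic ∧
      ¬((G.spanningInduce X).deleteEdges {s(x, y)}).Reachable x y := by
  rw [isInducedForest_iff]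
  refine ⟨fun h => ⟨h.anti (deleteEdges_le _), fun hr => ?_⟩,
    fun ⟨h, hr⟩ => (h.sup_edge_of_not_reachable hr).anti le_sdiff_sup⟩
  have hx := mem_of_reachable_of_ne (deleteEdges_le _) hr hxy.ne
  have hy := mem_of_reachable_of_ne (deleteEdges_le _) hr.symm hxy.ne.symm
  exact isAcyclic_iff_forall_adj_isBridge.mp h ⟨hx, hy, hxy⟩ hr

/-- Removing `xy` leaves `y` as a leaf hanging at `z`. -/
theorem isAcyclic_deleteEdges_iff_isInducedForest_erase [DecidableEq V] (hyz : y ≠ z)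
    (hnbr : ∀ b, G.Adj y b → b = x ∨ b = z) :
    ((G.spanningInduce X).deleteEdges {s(x, y)}).IsAcyclic ↔ IsInducedForest G (X.erase y) := by
  rw [isInducedForest_iff]
  refine ⟨fun h => h.anti fun a b ⟨ha, hb, hab⟩ => ?_, fun h => ?_⟩
  · simp only [Finset.coe_erase, Set.mem_sdiff, Finset.mem_coe, Set.mem_singleton_iff] at ha hb
    simp [ha, hb, hab]
  have hy : ¬(G.spanningInduce (X.erase y)).Reachable y z := fun hr => by
    simpa using mem_of_reachable_of_ne le_rfl hr hyz
  refine (h.sup_edge_of_not_reachable hy).anti fun a b hab => ?_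
  obtain ⟨⟨ha, hb, hGab⟩, hne⟩ := deleteEdges_adj.mp hab
  by_cases hay : a = y
  · subst hay
    rcases hnbr b hGab with rfl | rfl
    · simp [Sym2.eq_swap] at hne
    · exact Or.inr ((edge_adj _ _ _ _).mpr ⟨Or.inl ⟨rfl, rfl⟩, hyz⟩)
  by_cases hby : b = y
  · subst hby
    rcases hnbr a hGab.symm with rfl | rfl
    · simp at hne
    · exact Or.inr ((edge_adj _ _ _ _).mpr ⟨Or.inr ⟨rfl, rfl⟩, hyz.symm⟩)
  exact Or.inl ⟨by simpa [hay] using ha, by simpa [hby] using hb, hGab⟩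

end DeleteEdge

section Subdivision

open Sum

variable {V : Type*} {G : SimpleGraph V} {x y : V} {d s t : ℕ}

/-- The vertex at position `s` of the new path `y = v₀, v₁, …, v_{d-1}, v_d = x`; the interior
vertex `vₛ` is `inr (s - 1)`. -/
def pathVertex (x y : V) (d s : ℕ) : V ⊕ Fin (d - 1) :=
  if h₀ : s = 0 then inl y else if h : s < d then inr ⟨s - 1, by omega⟩ else inl x

/-- Contracts the new path onto the edge `xy`: positions up to `t` go to `y`, the others to `x`,
so that the `t`-th path edge is the only one that survives, as `xy`. -/
def collapse (x y : V) (t : ℕ) : V ⊕ Fin (d - 1) → V :=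
  Sum.elim id fun m => if (m : ℕ) < t then y else x

@[simp] theorem collapse_inl {u : V} : collapse (d := d) x y t (inl u) = u := rfl

theorem pathVertex_zero : pathVertex x y d 0 = inl y := rfl

theorem pathVertex_of_lt (h₀ : 0 < s) (h : s < d) :
    pathVertex x y d s = inr ⟨s - 1, by omega⟩ := by
  simp [pathVertex, h₀.ne', h]

theorem pathVertex_of_le (h₀ : 0 < s) (h : d ≤ s) : pathVertex x y d s = inl x := by
  simp [pathVertex, h₀.ne', not_lt.mpr h]

theorem collapse_pathVertex (ht : t < d) (hs : s ≤ d) :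
    collapse x y t (pathVertex x y d s) = if s ≤ t then y else x := by
  rcases Nat.eq_zero_or_pos s with rfl | h₀
  · simp [pathVertex_zero, collapse]
  rcases hs.lt_or_eq with hs | rfl
  · rw [pathVertex_of_lt h₀ hs]
    simp only [collapse, elim_inr]
    congr 1
    exact propext (by omega)
  · simp [pathVertex_of_le h₀ le_rfl, collapse, not_le.mpr ht]

theorem subdividedGraph_adj_inl {u v : V} :
    (subdividedGraph G x y d).Adj (inl u) (inl v) ↔ G.Adj u v ∧ s(u, v) ≠ s(x, y) := by
  simp only [subdividedGraph, fromRel_adj, ne_eq, inl.injEq, Sym2.eq_iff]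
  constructor
  · rintro ⟨-, ⟨h, hne⟩ | ⟨h, hne⟩⟩
    · exact ⟨h, by tauto⟩
    · exact ⟨h.symm, by tauto⟩
  · rintro ⟨h, hne⟩
    exact ⟨h.ne, Or.inl ⟨h, by tauto⟩⟩

theorem subdividedGraph_adj_pathVertex (hd : 2 ≤ d) (hs : s < d) :
    (subdividedGraph G x y d).Adj (pathVertex x y d s) (pathVertex x y d (s + 1)) := by
  rcases Nat.eq_zero_or_pos s with rfl | h₀
  · rw [pathVertex_zero, zero_add, pathVertex_of_lt one_pos (by omega)]
    simp [subdividedGraph]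
  rcases (Nat.succ_le_of_lt hs).lt_or_eq with hs' | hs'
  · rw [pathVertex_of_lt h₀ hs, pathVertex_of_lt (by omega) hs']
    simp [subdividedGraph]
    omega
  · rw [pathVertex_of_lt h₀ hs, pathVertex_of_le (by omega) hs'.ge]
    simp [subdividedGraph]
    omega

theorem subdividedGraph_adj_cases (hd : 2 ≤ d) {a b : V ⊕ Fin (d - 1)}
    (h : (subdividedGraph G x y d).Adj a b) :
    (∃ u v, a = inl u ∧ b = inl v ∧ G.Adj u v ∧ s(u, v) ≠ s(x, y)) ∨
      ∃ s < d, s(a, b) = s(pathVertex x y d s, pathVertex x y d (s + 1)) := by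
  have h_inl_inr {u : V} {j : Fin (d - 1)}
      (h : u = y ∧ (j : ℕ) = 0 ∨ u = x ∧ (j : ℕ) = d - 2) :
      ∃ s < d, s(inl u, inr j) = s(pathVertex x y d s, pathVertex x y d (s + 1)) := by
    rcases h with ⟨rfl, hj⟩ | ⟨rfl, hj⟩
    · refine ⟨0, by omega, ?_⟩
      rw [pathVertex_zero, zero_add, pathVertex_of_lt one_pos (by omega)]
      simp [Fin.ext_iff, hj]
    · refine ⟨d - 1, by omega, ?_⟩
      rw [pathVertex_of_lt (by omega) (by omega), Nat.sub_add_cancel (by omega),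
        pathVertex_of_le (by omega) le_rfl, Sym2.eq_swap]
      simp [Fin.ext_iff, hj]
      omega
  have h_inr_inr {i j : Fin (d - 1)} (h : (i : ℕ) + 1 = j) :
      ∃ s < d, s(inr i, inr j) = s(pathVertex x y d s, pathVertex x y d (s + 1)) := by
    refine ⟨i + 1, by omega, ?_⟩
    rw [pathVertex_of_lt (by omega) (by omega), pathVertex_of_lt (by omega) (by omega)]
    simp [Fin.ext_iff]
    omega
  rcases a with u | i <;> rcases b with v | j
  · exact Or.inl ⟨u, v, rfl, rfl, subdividedGraph_adj_inl.mp h⟩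
  all_goals
    right
    simp [subdividedGraph] at h
  · exact h_inl_inr h
  · rw [Sym2.eq_swap]
    exact h_inl_inr h
  · rcases h.2 with h | h
    · exact h_inr_inr h
    · rw [Sym2.eq_swap]
      exact h_inr_inr h

end Subdivision

section SubdividedForest

open Sum

variable {V : Type*} {G : SimpleGraph V} {x y : V} {d t : ℕ} {Z : Finset (V ⊕ Fin (d - 1))}

theorem pathVertex_mem_of_sym2_eq {s : ℕ} {u v : V ⊕ Fin (d - 1)}
    (h : s(u, v) = s(pathVertex x y d s, pathVertex x y d (s + 1))) (hu : u ∈ Z) (hv : v ∈ Z) :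
    pathVertex x y d s ∈ Z ∧ pathVertex x y d (s + 1) ∈ Z :=
  rel_of_sym2_eq (r := fun a b => a ∈ Z ∧ b ∈ Z) (fun _ _ h => h.symm) h.symm ⟨hu, hv⟩

theorem isBridge_inl_of_collapse (hd : 2 ≤ d) {H : SimpleGraph V} (hH : H.IsAcyclic)
    (hle : (G.spanningInduce Z.toLeft).deleteEdges {s(x, y)} ≤ H) (ht : t < d)
    (hyx : pathVertex x y d t ∈ Z → pathVertex x y d (t + 1) ∈ Z → H.Adj y x) {p q : V}
    (hpq : ((subdividedGraph G x y d).spanningInduce Z).Adj (inl p) (inl q)) :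
    ((subdividedGraph G x y d).spanningInduce Z).IsBridge s(inl p, inl q) := by
  obtain ⟨hp, hq, hGpq⟩ := hpq
  rw [subdividedGraph_adj_inl] at hGpq
  have hHpq : H.Adj p q :=
    hle (deleteEdges_adj.mpr ⟨⟨by simpa using hp, by simpa using hq, hGpq.1⟩, hGpq.2⟩)
  refine isBridge_of_map hH (collapse x y t) hHpq fun u v huv => ?_
  obtain ⟨⟨hu, hv, hG⟩, hne⟩ := deleteEdges_adj.mp huv
  simp only [collapse_inl]
  rcases subdividedGraph_adj_cases hd hG with ⟨u, v, rfl, rfl, hGuv, hneuv⟩ | ⟨s, hs, hsym⟩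
  · refine Adj.reachable (deleteEdges_adj.mpr ⟨hle (deleteEdges_adj.mpr
      ⟨⟨by simpa using hu, by simpa using hv, hGuv⟩, hneuv⟩), fun h => hne ?_⟩)
    simp_all
  refine rel_of_sym2_eq (r := fun a b => (H.deleteEdges {s(p, q)}).Reachable
    (collapse x y t a) (collapse x y t b)) (fun _ _ h => h.symm) hsym ?_
  rw [collapse_pathVertex ht (by omega), collapse_pathVertex ht (by omega)]
  by_cases hst : s = t
  · subst hst
    rw [if_pos le_rfl, if_neg (by omega)]
    obtain ⟨hs₀, hs₁⟩ := pathVertex_mem_of_sym2_eq hsym hu hv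
    refine Adj.reachable
      (deleteEdges_adj.mpr ⟨by simpa using hyx hs₀ hs₁, fun h => hGpq.2 ?_⟩)
    rw [← Set.mem_singleton_iff.mp h, Sym2.eq_swap]
  · rw [if_congr (show s ≤ t ↔ s + 1 ≤ t by omega) rfl rfl]

theorem isBridge_pathVertex_of_collapse (hd : 2 ≤ d) {H : SimpleGraph V} (hH : H.IsAcyclic)
    (hle : (G.spanningInduce Z.toLeft).deleteEdges {s(x, y)} ≤ H) (hyx : H.Adj y x)
    (ht : t < d) :
    ((subdividedGraph G x y d).spanningInduce Z).IsBridge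
      s(pathVertex x y d t, pathVertex x y d (t + 1)) := by
  have hy : collapse x y t (pathVertex x y d t) = y := by
    rw [collapse_pathVertex ht ht.le, if_pos le_rfl]
  have hx : collapse x y t (pathVertex x y d (t + 1)) = x := by
    rw [collapse_pathVertex ht ht, if_neg (by omega)]
  refine isBridge_of_map hH (collapse x y t) (by rwa [hy, hx]) fun u v huv => ?_
  obtain ⟨⟨hu, hv, hG⟩, hne⟩ := deleteEdges_adj.mp huv
  rw [hy, hx]
  rcases subdividedGraph_adj_cases hd hG with ⟨u, v, rfl, rfl, hGuv, hneuv⟩ | ⟨s, hs, hsym⟩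
  · refine Adj.reachable (deleteEdges_adj.mpr ⟨hle (deleteEdges_adj.mpr
      ⟨⟨by simpa using hu, by simpa using hv, hGuv⟩, hneuv⟩), fun h => hneuv ?_⟩)
    rw [collapse_inl, collapse_inl, Set.mem_singleton_iff] at h
    rw [h, Sym2.eq_swap]
  have hst : s ≠ t := by
    rintro rfl
    exact hne hsym
  refine rel_of_sym2_eq (r := fun a b => (H.deleteEdges {s(y, x)}).Reachable
    (collapse x y t a) (collapse x y t b)) (fun _ _ h => h.symm) hsym ?_
  rw [collapse_pathVertex ht (by omega), collapse_pathVertex ht (by omega),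
    if_congr (show s ≤ t ↔ s + 1 ≤ t by omega) rfl rfl]

/-- Without the interior vertex `inr i`, the path edges lying between a given path edge and the
gap can only be left through that edge. -/
theorem isBridge_pathVertex_of_cut (hd : 2 ≤ d) {i : Fin (d - 1)} (hi : inr i ∉ Z) (ht : t < d)
    (ht₀ : pathVertex x y d t ∈ Z) (ht₁ : pathVertex x y d (t + 1) ∈ Z) :
    ((subdividedGraph G x y d).spanningInduce Z).IsBridge
      s(pathVertex x y d t, pathVertex x y d (t + 1)) := by
  have hgap : ∀ s, pathVertex x y d s ∈ Z → s ≠ i + 1 := by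
    rintro s hs rfl
    rw [pathVertex_of_lt (by omega) (by omega)] at hs
    exact hi (by simpa using hs)
  let C : Set (V ⊕ Fin (d - 1)) :=
    {w | ∃ m : Fin (d - 1), w = inr m ∧ (t ≤ m ↔ (m : ℕ) ≤ i)}
  have hC : ∀ s ≤ d, pathVertex x y d s ∈ C ↔ (t < s ↔ s ≤ i + 1) := by
    intro s hs
    rcases Nat.eq_zero_or_pos s with rfl | h₀
    · simp [C, pathVertex_zero]
    rcases hs.lt_or_eq with hs | rfl
    · simp only [pathVertex_of_lt h₀ hs, C, Set.mem_ofPred_eq, inr.injEq, exists_eq_left']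
      omega
    · simp only [pathVertex_of_le h₀ le_rfl, C, Set.mem_ofPred_eq, reduceCtorEq, false_and,
        exists_false, false_iff]
      omega
  refine isBridge_of_cut C ?_ fun u v huv => ?_
  · rw [hC t ht.le, hC (t + 1) ht]
    have := hgap t ht₀
    have := hgap (t + 1) ht₁
    omega
  obtain ⟨⟨hu, hv, hG⟩, hne⟩ := deleteEdges_adj.mp huv
  rcases subdividedGraph_adj_cases hd hG with ⟨u, v, rfl, rfl, -⟩ | ⟨s, hs, hsym⟩
  · simp [C]
  have hst : s ≠ t := by
    rintro rfl
    exact hne hsym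
  obtain ⟨hs₀, hs₁⟩ := pathVertex_mem_of_sym2_eq hsym hu hv
  refine rel_of_sym2_eq (r := fun a b => a ∈ C ↔ b ∈ C) (fun _ _ h => h.symm) hsym ?_
  rw [hC s (by omega), hC (s + 1) hs]
  have := hgap s hs₀
  have := hgap (s + 1) hs₁
  omega

theorem isAcyclic_subdividedGraph_of_not_reachable (hd : 2 ≤ d) (hxy : x ≠ y)
    (hH : ((G.spanningInduce Z.toLeft).deleteEdges {s(x, y)}).IsAcyclic)
    (hr : ¬((G.spanningInduce Z.toLeft).deleteEdges {s(x, y)}).Reachable x y) :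
    ((subdividedGraph G x y d).spanningInduce Z).IsAcyclic := by
  refine isAcyclic_iff_forall_adj_isBridge.mpr fun a b hab => ?_
  have hyx : (((G.spanningInduce Z.toLeft).deleteEdges {s(x, y)}) ⊔ edge x y).Adj y x :=
    Or.inr ((edge_adj _ _ _ _).mpr ⟨Or.inr ⟨rfl, rfl⟩, hxy.symm⟩)
  rcases subdividedGraph_adj_cases hd hab.2.2 with ⟨u, v, rfl, rfl, -⟩ | ⟨t, ht, hsym⟩
  · exact isBridge_inl_of_collapse hd (hH.sup_edge_of_not_reachable hr) le_sup_left
      (t := 0) (by omega) (fun _ _ => hyx) hab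
  · rw [hsym]
    exact isBridge_pathVertex_of_collapse hd (hH.sup_edge_of_not_reachable hr) le_sup_left hyx ht

theorem isAcyclic_subdividedGraph_of_notMem (hd : 2 ≤ d)
    (hH : ((G.spanningInduce Z.toLeft).deleteEdges {s(x, y)}).IsAcyclic) {i : Fin (d - 1)}
    (hi : inr i ∉ Z) :
    ((subdividedGraph G x y d).spanningInduce Z).IsAcyclic := by
  refine isAcyclic_iff_forall_adj_isBridge.mpr fun a b hab => ?_
  rcases subdividedGraph_adj_cases hd hab.2.2 with ⟨u, v, rfl, rfl, -⟩ | ⟨t, ht, hsym⟩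
  · refine isBridge_inl_of_collapse hd hH le_rfl (t := i) (by omega) (fun _ h => ?_) hab
    rw [pathVertex_of_lt (by omega) (by omega)] at h
    exact absurd (by simpa using h) hi
  · obtain ⟨ht₀, ht₁⟩ := pathVertex_mem_of_sym2_eq hsym hab.1 hab.2.1
    rw [hsym]
    exact isBridge_pathVertex_of_cut hd hi ht ht₀ ht₁

theorem isAcyclic_deleteEdges_of_isAcyclic_subdividedGraph
    (h : ((subdividedGraph G x y d).spanningInduce Z).IsAcyclic) :
    ((G.spanningInduce Z.toLeft).deleteEdges {s(x, y)}).IsAcyclic :=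
  h.comap ⟨inl, fun huv => by
    obtain ⟨⟨hu, hv, huv⟩, hne⟩ := deleteEdges_adj.mp huv
    exact ⟨by simpa using hu, by simpa using hv, subdividedGraph_adj_inl.mpr ⟨huv, hne⟩⟩⟩
    inl_injective

/-- An `x`–`y` connection avoiding `xy`, followed by the new path, is a cycle. -/
theorem not_reachable_of_isAcyclic_subdividedGraph (hd : 2 ≤ d) (hxy : x ≠ y)
    (hZ : ∀ i, inr i ∈ Z) (h : ((subdividedGraph G x y d).spanningInduce Z).IsAcyclic) :
    ¬((G.spanningInduce Z.toLeft).deleteEdges {s(x, y)}).Reachable x y := by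
  intro hr
  have hx := mem_of_reachable_of_ne (deleteEdges_le _) hr hxy
  have hy := mem_of_reachable_of_ne (deleteEdges_le _) hr.symm hxy.symm
  set K := (subdividedGraph G x y d).spanningInduce Z
  set e := s(pathVertex x y d 0, pathVertex x y d 1)
  have hmem : ∀ s, 0 < s → pathVertex x y d s ∈ Z := fun s h₀ => by
    rcases lt_or_ge s d with hs | hs
    · rw [pathVertex_of_lt h₀ hs]
      exact hZ _
    · rw [pathVertex_of_le h₀ hs]
      simpa using hx
  have hne : ∀ s, 0 < s → pathVertex x y d s ≠ inl y := fun s h₀ => by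
    rcases lt_or_ge s d with hs | hs
    · simp [pathVertex_of_lt h₀ hs]
    · simpa [pathVertex_of_le h₀ hs] using hxy
  have hpath : (K.deleteEdges {e}).Reachable (pathVertex x y d 1) (pathVertex x y d d) := by
    refine reachable_of_adj_succ _ (by omega) fun s hs₁ hs => ?_
    refine deleteEdges_adj.mpr ⟨⟨hmem s hs₁, hmem _ (by omega),
      subdividedGraph_adj_pathVertex hd hs⟩, fun h => ?_⟩
    rcases Sym2.eq_iff.mp (Set.mem_singleton_iff.mp h) with ⟨h, -⟩ | ⟨-, h⟩
    · exact hne s hs₁ h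
    · exact hne (s + 1) (by omega) h
  have hxy' : (K.deleteEdges {e}).Reachable (inl x) (inl y) := by
    refine hr.lift inl fun u v huv => Adj.reachable (deleteEdges_adj.mpr ⟨?_, by simp [e,
      pathVertex_zero, pathVertex_of_lt one_pos (show 1 < d by omega)]⟩)
    obtain ⟨⟨hu, hv, huv⟩, hne⟩ := deleteEdges_adj.mp huv
    exact ⟨by simpa using hu, by simpa using hv, subdividedGraph_adj_inl.mpr ⟨huv, hne⟩⟩
  refine isAcyclic_iff_forall_adj_isBridge.mp h (v := pathVertex x y d 0)
    ⟨by simpa [pathVertex_zero] using hy, hmem 1 one_pos,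
      subdividedGraph_adj_pathVertex hd (by omega)⟩ ?_
  rw [pathVertex_of_le (by omega) le_rfl] at hpath
  exact (hpath.trans hxy').symm

end SubdividedForest

section MaximalForests

open Sum Finset

variable {V : Type*} {G : SimpleGraph V} {x y z : V} {d : ℕ} {X : Finset V}
  {P : Finset (Fin (d - 1))}

theorem isInducedForest_subdividedGraph_disjSum_univ (hxy : G.Adj x y) (hd : 2 ≤ d) :
    IsInducedForest (subdividedGraph G x y d) (X.disjSum univ) ↔ IsInducedForest G X := by
  rw [isInducedForest_iff, isInducedForest_iff_deleteEdges hxy]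
  refine ⟨fun h => ?_, fun ⟨hH, hr⟩ => ?_⟩
  · simpa using And.intro (isAcyclic_deleteEdges_of_isAcyclic_subdividedGraph h)
      (not_reachable_of_isAcyclic_subdividedGraph hd hxy.ne (by simp) h)
  · exact isAcyclic_subdividedGraph_of_not_reachable hd hxy.ne (by simpa using hH)
      (by simpa using hr)

theorem isInducedForest_subdividedGraph_disjSum_of_ne_univ [DecidableEq V] (hd : 2 ≤ d)
    (hyz : y ≠ z) (hnbr : ∀ b, G.Adj y b → b = x ∨ b = z) (hP : P ≠ univ) :
    IsInducedForest (subdividedGraph G x y d) (X.disjSum P) ↔ IsInducedForest G (X.erase y) := by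
  rw [isInducedForest_iff, ← isAcyclic_deleteEdges_iff_isInducedForest_erase hyz hnbr]
  obtain ⟨i, hi⟩ : ∃ i, i ∉ P := by
    by_contra! h
    exact hP (eq_univ_iff_forall.mpr h)
  exact ⟨fun h => by simpa using isAcyclic_deleteEdges_of_isAcyclic_subdividedGraph h,
    fun h => isAcyclic_subdividedGraph_of_notMem hd (by simpa using h) (i := i)
      (by simpa using hi)⟩

theorem IsMaximalInducedForest.disjSum_univ (hxy : G.Adj x y) (hd : 2 ≤ d)
    (hX : IsMaximalInducedForest G X) :
    IsMaximalInducedForest (subdividedGraph G x y d) (X.disjSum univ) := by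
  refine ⟨(isInducedForest_subdividedGraph_disjSum_univ hxy hd).mpr hX.1, fun Y hXY hY => ?_⟩
  have hR : Y.toRight = univ :=
    eq_univ_of_forall fun i => mem_toRight.mpr (hXY.subset (inr_mem_disjSum.mpr (mem_univ i)))
  rw [← toLeft_disjSum_toRight (u := Y), hR] at hXY hY
  have := hX.eq_of_subset ((isInducedForest_subdividedGraph_disjSum_univ hxy hd).mp hY)
    fun u hu => by simpa using hXY.subset (inl_mem_disjSum.mpr hu)
  exact hXY.ne (by rw [this])

theorem IsMaximalInducedForest.erase_of_subdividedGraph_disjSum [DecidableEq V]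
    (hxy : G.Adj x y) (hd : 2 ≤ d) (hyz : y ≠ z) (hnbr : ∀ b, G.Adj y b → b = x ∨ b = z)
    (hP : P ≠ univ) (hZ : IsMaximalInducedForest (subdividedGraph G x y d) (X.disjSum P)) :
    IsMaximalInducedForest G (X.erase y) ∧ y ∈ X ∧ P.card = d - 2 := by
  have hne_univ {X' : Finset V} {P' : Finset (Fin (d - 1))} (hP' : P' ≠ univ) :=
    isInducedForest_subdividedGraph_disjSum_of_ne_univ (X := X') hd hyz hnbr hP'
  have hM := (hne_univ hP).mp hZ.1
  have hX : ¬IsInducedForest G X := fun hX => hP <| by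
    simpa using congrArg toRight (hZ.eq_of_subset
      ((isInducedForest_subdividedGraph_disjSum_univ hxy hd).mpr hX)
      (disjSum_mono Subset.rfl (subset_univ P)))
  have hy : y ∈ X := by
    by_contra hy
    exact hX (by rwa [erase_eq_of_notMem hy] at hM)
  obtain ⟨i, hi⟩ : ∃ i, i ∉ P := by
    by_contra! h
    exact hP (eq_univ_iff_forall.mpr h)
  have hPi : P = univ.erase i := by
    have hsub : P ⊆ univ.erase i :=
      fun j hj => mem_erase.mpr ⟨fun h => hi (h ▸ hj), mem_univ j⟩
    have hne : univ.erase i ≠ univ := fun h => notMem_erase i univ (by rw [h]; exact mem_univ i)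
    simpa using congrArg toRight
      (hZ.eq_of_subset ((hne_univ hne).mpr hM) (disjSum_mono Subset.rfl hsub))
  refine ⟨⟨hM, fun Y hMY hY => ?_⟩, hy, by simp [hPi]; omega⟩
  by_cases hyY : y ∈ Y
  · refine hX (hY.mono fun u hu => ?_)
    by_cases huy : u = y
    · exact huy ▸ hyY
    · exact hMY.subset (mem_erase.mpr ⟨huy, hu⟩)
  have hXY : X ⊆ insert y Y := fun u hu => by
    by_cases huy : u = y
    · exact huy ▸ mem_insert_self y Y
    · exact mem_insert_of_mem (hMY.subset (mem_erase.mpr ⟨huy, hu⟩))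
  have := congrArg toLeft (hZ.eq_of_subset ((hne_univ hP).mpr (by rwa [erase_insert hyY]))
    (disjSum_mono hXY Subset.rfl))
  simp only [toLeft_disjSum] at this
  exact hMY.ne (by rw [this, erase_insert hyY])

theorem IsMaximalInducedForest.exists_of_subdividedGraph [DecidableEq V] (hxy : G.Adj x y)
    (hd : 2 ≤ d) (hyz : y ≠ z) (hnbr : ∀ b, G.Adj y b → b = x ∨ b = z)
    {Z : Finset (V ⊕ Fin (d - 1))}
    (hZ : IsMaximalInducedForest (subdividedGraph G x y d) Z) :
    ∃ M, IsMaximalInducedForest G M ∧ Z.card = M.card + (d - 1) := by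
  obtain ⟨X, P, rfl⟩ : ∃ (X : Finset V) (P : Finset (Fin (d - 1))), Z = X.disjSum P :=
    ⟨_, _, toLeft_disjSum_toRight.symm⟩
  have huniv {X' : Finset V} := isInducedForest_subdividedGraph_disjSum_univ (X := X') hxy hd
  by_cases hP : P = univ
  · subst hP
    refine ⟨X, ⟨huniv.mp hZ.1, fun Y hXY hY => hXY.ne ?_⟩, by simp⟩
    simpa using congrArg toLeft
      (hZ.eq_of_subset (huniv.mpr hY) (disjSum_mono hXY.subset Subset.rfl))
  obtain ⟨hM, hy, hcard⟩ := hZ.erase_of_subdividedGraph_disjSum hxy hd hyz hnbr hP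
  refine ⟨_, hM, ?_⟩
  have := card_pos.mpr ⟨y, hy⟩
  rw [card_disjSum, hcard, card_erase_of_mem hy]
  omega

end MaximalForests

theorem exists_adj_eq_or_eq_of_degree_eq_two {V : Type*} [Fintype V] [DecidableEq V]
    {G : SimpleGraph V} [DecidableRel G.Adj] {x y : V} (hyx : G.Adj y x) (h : G.degree y = 2) :
    ∃ z, y ≠ z ∧ ∀ b, G.Adj y b → b = x ∨ b = z := by
  have hcard : ((G.neighborFinset y).erase x).card = 1 := by
    rw [Finset.card_erase_of_mem (by simpa using hyx), card_neighborFinset_eq_degree, h]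
  obtain ⟨z, hz⟩ := Finset.card_eq_one.mp hcard
  have hmem : ∀ b, b ≠ x → G.Adj y b → b = z := fun b hbx hb => by
    simpa [hz] using Finset.mem_erase.mpr ⟨hbx, (mem_neighborFinset G y b).mpr hb⟩
  have hyz : G.Adj y z :=
    (G.mem_neighborFinset y z).mp (Finset.mem_erase.mp (hz ▸ Finset.mem_singleton_self z)).2
  exact ⟨z, hyz.ne, fun b hb => (eq_or_ne b x).imp_right fun hbx => hmem b hbx hb⟩

/-- If `x` and `y` are adjacent in `G`, `y` has degree 2, and `d ≥ 2`,
then the graph `G*` obtained by replacing the edge `{x,y}` by a path of length `d`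
with new interior vertices is well-f-covered iff `G` is, and in either case
`f(G*) = f(G) + d - 1`. -/
theorem stmt9 {V : Type*} [Fintype V] [DecidableEq V] (G : SimpleGraph V)
    [DecidableRel G.Adj] (x y : V) (hxy : G.Adj x y) (hdeg : G.degree y = 2)
    (d : ℕ) (hd : 2 ≤ d) :
    (WellFCovered (subdividedGraph G x y d) ↔ WellFCovered G) ∧
      forestNum (subdividedGraph G x y d) = forestNum G + d - 1 := by
  obtain ⟨z, hyz, hnbr⟩ := exists_adj_eq_or_eq_of_degree_eq_two hxy.symm hdeg
  rw [Nat.add_sub_assoc (by omega)]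
  exact wellFCovered_iff_and_forestNum_eq _ (d - 1)
    (fun X hX => ⟨_, hX.disjSum_univ hxy hd, by simp⟩)
    (fun Z hZ => hZ.exists_of_subdividedGraph hxy hd hyz hnbr)
end

section
/- Let G and H be finite simple graphs on disjoint vertex sets such that G has at least one edge and H is edgeless with exactly n ≥ 2 vertices. Then the join G ∨ H is well-f-covered if and only if all of the following hold: (1) G is well-f-covered; (2) any two maximal independent sets of G of cardinality at least 2 have the same cardinality; (3) f(G) = α(G) + 1 = n + 1. In that case f(G ∨ H) = f(G) = n + 1. -/
/-!
Split a vertex set `X` of `G ∨ H`, with `H` edgeless, as `A ⊔ B`, `A ⊆ V(G)`, `B ⊆ V(H)`. Since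
every vertex of `A` is joined to every vertex of `B`, `X` induces a forest iff `A` does and either
`B = ∅`, or `|A| ≤ 1`, or `A` is independent and `|B| ≤ 1`: otherwise a triangle or a 4-cycle
appears. So the maximal induced forests of the join are the maximal induced forests of `G` (which
contain an edge of `G`), one vertex of `G` together with all of `H` (of size `n + 1`), and the
maximal independent sets of `G` of size at least 2 together with one vertex of `H`. The join is
well-f-covered iff all of them have size `n + 1`. Independent sets of size 2 exist because a forest
on `n + 1 ≥ 3` vertices has two non-adjacent vertices, and this gives `α(G) = n`.
-/

open Finset

namespace SimpleGraph

variable {α : Type*} {G : SimpleGraph α} {a b c d : α}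

theorem IsAcyclic.not_adj_of_adj_of_adj (hG : G.IsAcyclic) (hab : G.Adj a b) (hbc : G.Adj b c) :
    ¬ G.Adj a c := fun hac ↦ by
  have := (hG.subsingleton_path a c).elim ⟨.cons hac .nil, by simp [hac.ne]⟩
    ⟨.cons hab (.cons hbc .nil), by simp [hab.ne, hbc.ne, hac.ne]⟩
  simpa using congrArg (fun p : G.Path a c ↦ p.1.length) this

theorem IsAcyclic.eq_of_adj_of_adj (hG : G.IsAcyclic) (hac : a ≠ c) (hab : G.Adj a b)
    (hbc : G.Adj b c) (had : G.Adj a d) (hdc : G.Adj d c) : b = d := by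
  have := (hG.subsingleton_path a c).elim
    ⟨.cons hab (.cons hbc .nil), by simp [hab.ne, hbc.ne, hac]⟩
    ⟨.cons had (.cons hdc .nil), by simp [had.ne, hdc.ne, hac]⟩
  simpa using congrArg (fun p : G.Path a c ↦ p.1.getVert 1) this

end SimpleGraph

namespace Finset

variable {α : Type*} {P : Finset α → Prop} {X : Finset α} {k : ℕ}

theorem maximal_of_forall_card_le (hX : P X) (h : ∀ Y, P Y → X ⊆ Y → #Y ≤ #X) : Maximal P X :=
  ⟨hX, fun Y hY hXY ↦ (eq_of_subset_of_card_le hXY (h Y hY hXY)).ge⟩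

variable [Fintype α]

theorem exists_maximal_card_eq_sSup (hP : ∃ X, P X) :
    ∃ X, Maximal P X ∧ #X = sSup {n | ∃ X, P X ∧ #X = n} := by
  have hbdd : BddAbove {n | ∃ X, P X ∧ #X = n} :=
    ⟨Fintype.card α, by rintro _ ⟨X, -, rfl⟩; exact card_le_univ X⟩
  obtain ⟨X₀, hX₀⟩ := hP
  obtain ⟨X, hX, hcard⟩ := Nat.sSup_mem (s := {n | ∃ X, P X ∧ #X = n}) ⟨#X₀, X₀, hX₀, rfl⟩ hbdd
  exact ⟨X, maximal_of_forall_card_le hX fun Y hY _ ↦ hcard ▸ le_csSup hbdd ⟨Y, hY, rfl⟩, hcard⟩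

theorem sSup_card_eq (hk : ∃ X, P X ∧ #X = k) (h : ∀ X, Maximal P X → #X ≤ k) :
    sSup {n | ∃ X, P X ∧ #X = n} = k := by
  have hle : ∀ n ∈ {n | ∃ X, P X ∧ #X = n}, n ≤ k := by
    rintro _ ⟨X, hX, rfl⟩
    obtain ⟨Y, hXY, hY⟩ := Finite.exists_le_maximal hX
    exact (card_le_card hXY).trans (h Y hY)
  exact le_antisymm (csSup_le ⟨k, hk⟩ hle) (le_csSup ⟨k, hle⟩ hk)

end Finset

section InducedForest

open SimpleGraph

variable {V : Type*} {G : SimpleGraph V} {X Y S : Finset V} {a b c d : V}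

theorem isMaximalInducedForest_iff : IsMaximalInducedForest G X ↔ Maximal (IsInducedForest G) X :=
  maximal_iff_forall_gt.symm

theorem isMaximalIndepSet_iff : IsMaximalIndepSet G X ↔ Maximal (IsIndepFinset G) X :=
  maximal_iff_forall_gt.symm

theorem IsIndepFinset.subset (hY : IsIndepFinset G Y) (hXY : X ⊆ Y) : IsIndepFinset G X :=
  fun _ hu _ hv ↦ hY (hXY hu) (hXY hv)

theorem isIndepFinset_of_card_le_one (hX : #X ≤ 1) : IsIndepFinset G X :=
  fun _ hu _ hv huv ↦ huv.ne (card_le_one.mp hX _ hu _ hv)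

theorem IsInducedForest.subset (hY : IsInducedForest G Y) (hXY : X ⊆ Y) : IsInducedForest G X :=
  IsAcyclic.embedding (G.induceHomOfLE (coe_subset.mpr hXY)) hY

theorem isInducedForest_of_forall_adj (hS : #S ≤ 1)
    (h : ∀ u ∈ X, ∀ v ∈ X, G.Adj u v → u ∈ S ∨ v ∈ S) : IsInducedForest G X := by
  obtain rfl | ⟨r, rfl⟩ : S = ∅ ∨ ∃ r, S = {r} := by
    rcases Nat.le_one_iff_eq_zero_or_eq_one.mp hS with h0 | h1
    · exact .inl (card_eq_zero.mp h0)
    · exact .inr (card_eq_one.mp h1)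
  · exact isAcyclic_bot.anti fun u v huv ↦ by simpa using h u u.2 v v.2 huv
  · refine (isAcyclic_starGraph r).comap ⟨Subtype.val, fun {u v} huv ↦ ?_⟩ Subtype.val_injective
    simpa [(show G.Adj u v from huv).ne] using h u u.2 v v.2 huv

theorem IsIndepFinset.isInducedForest (hX : IsIndepFinset G X) : IsInducedForest G X :=
  isInducedForest_of_forall_adj (S := ∅) (by simp) fun _ hu _ hv huv ↦ (hX hu hv huv).elim

theorem isInducedForest_empty : IsInducedForest G ∅ :=
  (isIndepFinset_of_card_le_one (by simp)).isInducedForest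

theorem IsIndepFinset.isInducedForest_insert [DecidableEq V] (hX : IsIndepFinset G X) (a : V) :
    IsInducedForest G (insert a X) :=
  isInducedForest_of_forall_adj (S := {a}) (by simp) fun u hu v hv huv ↦ by
    rw [mem_insert] at hu hv
    by_contra! h
    exact hX (hu.resolve_left (by simpa using h.1)) (hv.resolve_left (by simpa using h.2)) huv

theorem isInducedForest_map_iff {W : Type*} {H : SimpleGraph W} (f : G ↪g H) :
    IsInducedForest H (X.map f.toEmbedding) ↔ IsInducedForest G X :=
  Iso.isAcyclic_iff
    { toEquiv := (Equiv.Set.image f X f.injective).trans (Equiv.setCongr (by simp))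
      map_rel_iff' := f.map_adj_iff }
    |>.symm

theorem IsInducedForest.not_adj_of_adj_of_adj (hX : IsInducedForest G X) (ha : a ∈ X)
    (hb : b ∈ X) (hc : c ∈ X) (hab : G.Adj a b) (hbc : G.Adj b c) : ¬ G.Adj a c :=
  IsAcyclic.not_adj_of_adj_of_adj (G := G.induce (X : Set V)) (a := ⟨a, ha⟩) (b := ⟨b, hb⟩)
    (c := ⟨c, hc⟩) hX hab hbc

theorem IsInducedForest.eq_of_adj_of_adj (hX : IsInducedForest G X) (ha : a ∈ X) (hb : b ∈ X)
    (hc : c ∈ X) (hd : d ∈ X) (hac : a ≠ c) (hab : G.Adj a b) (hbc : G.Adj b c)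
    (had : G.Adj a d) (hdc : G.Adj d c) : b = d :=
  congrArg Subtype.val <| IsAcyclic.eq_of_adj_of_adj (G := G.induce (X : Set V)) (a := ⟨a, ha⟩)
    (b := ⟨b, hb⟩) (c := ⟨c, hc⟩) (d := ⟨d, hd⟩) hX (by simpa using hac) hab hbc had hdc

theorem IsInducedForest.exists_isIndepFinset_card_eq_two (hX : IsInducedForest G X)
    (h : 2 < #X) : ∃ S, IsIndepFinset G S ∧ #S = 2 := by
  obtain ⟨a, ha, b, hb, c, hc, hab, hac, hbc⟩ := two_lt_card.mp h
  have : ∃ u ∈ X, ∃ v ∈ X, u ≠ v ∧ ¬ G.Adj u v := by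
    by_contra! hadj
    exact hX.not_adj_of_adj_of_adj ha hb hc (hadj a ha b hb hab) (hadj b hb c hc hbc)
      (hadj a ha c hc hac)
  obtain ⟨u, -, v, -, huv, hnadj⟩ := this
  classical
  refine ⟨{u, v}, ?_, card_pair huv⟩
  simp [IsIndepFinset, hnadj, G.adj_comm v u]

theorem IsMaximalInducedForest.not_isIndepFinset (hX : IsMaximalInducedForest G X)
    (hab : G.Adj a b) : ¬ IsIndepFinset G X := fun hind ↦ by
  classical
  have hmem : ∀ u, u ∈ X := fun u ↦
    (isMaximalInducedForest_iff.mp hX).2 (hind.isInducedForest_insert u) (subset_insert u X)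
      (mem_insert_self u X)
  exact hind (hmem a) (hmem b) hab

end InducedForest

section Numbers

variable {V : Type*} [Fintype V] {G : SimpleGraph V} {X : Finset V} {k : ℕ}

theorem exists_isMaximalInducedForest (G : SimpleGraph V) : ∃ F, IsMaximalInducedForest G F :=
  let ⟨F, _, hF⟩ := Finite.exists_le_maximal (isInducedForest_empty (G := G))
  ⟨F, isMaximalInducedForest_iff.mpr hF⟩

theorem forestNum_eq_of_forall_card_eq (h : ∀ F, IsMaximalInducedForest G F → #F = k) :
    forestNum G = k := by
  obtain ⟨F, hF⟩ := exists_isMaximalInducedForest G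
  exact sSup_card_eq ⟨F, hF.1, h F hF⟩ fun F hF ↦ (h F (isMaximalInducedForest_iff.mpr hF)).le

theorem WellFCovered.card_eq_forestNum (hG : WellFCovered G) (hX : IsMaximalInducedForest G X) :
    #X = forestNum G := by
  obtain ⟨F, hF, hcard⟩ := exists_maximal_card_eq_sSup ⟨∅, isInducedForest_empty (G := G)⟩
  exact (hG X F hX (isMaximalInducedForest_iff.mpr hF)).trans hcard

theorem exists_isIndepFinset_card_eq_two (h : 2 < forestNum G) :
    ∃ S, IsIndepFinset G S ∧ #S = 2 := by
  obtain ⟨F, hF, hcard⟩ := exists_maximal_card_eq_sSup ⟨∅, isInducedForest_empty (G := G)⟩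
  exact hF.1.exists_isIndepFinset_card_eq_two (hcard ▸ h)

theorem indepNum_eq_of_forall_card_eq
    (h : ∀ S, IsMaximalIndepSet G S → 2 ≤ #S → #S = k) (hS : ∃ S, IsIndepFinset G S ∧ #S = 2) :
    indepNum G = k := by
  obtain ⟨S, hS, hS₂⟩ := hS
  obtain ⟨T, hST, hT⟩ := Finite.exists_le_maximal hS
  have hT₂ : 2 ≤ #T := hS₂ ▸ card_le_card hST
  have hTk := h T (isMaximalIndepSet_iff.mpr hT) hT₂
  refine sSup_card_eq ⟨T, hT.1, hTk⟩ fun X hX ↦ ?_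
  by_cases hX₂ : 2 ≤ #X
  · exact (h X (isMaximalIndepSet_iff.mpr hX) hX₂).le
  · omega

theorem card_eq_indepNum
    (h : ∀ X Y, IsMaximalIndepSet G X → IsMaximalIndepSet G Y → 2 ≤ #X → 2 ≤ #Y → #X = #Y)
    (hα : 2 ≤ indepNum G) (hX : IsMaximalIndepSet G X) (hX₂ : 2 ≤ #X) : #X = indepNum G := by
  obtain ⟨S, hS, hcard⟩ :=
    exists_maximal_card_eq_sSup (P := IsIndepFinset G) ⟨∅, by simp [IsIndepFinset]⟩
  exact (h X S hX (isMaximalIndepSet_iff.mpr hS) hX₂ (hcard ▸ hα)).trans hcard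

end Numbers

section Join

variable {V W : Type*} {G : SimpleGraph V} {X : Finset (V ⊕ W)}

theorem isInducedForest_joinGraph_bot_iff :
    IsInducedForest (joinGraph G (⊥ : SimpleGraph W)) X ↔ IsInducedForest G X.toLeft ∧
      (X.toRight = ∅ ∨ #X.toLeft ≤ 1 ∨ (IsIndepFinset G X.toLeft ∧ #X.toRight ≤ 1)) := by
  let ι : G ↪g joinGraph G (⊥ : SimpleGraph W) := ⟨.inl, .rfl⟩
  have hmap : IsInducedForest (joinGraph G ⊥) (X.toLeft.map .inl) ↔ IsInducedForest G X.toLeft :=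
    isInducedForest_map_iff ι
  constructor
  · intro hX
    refine ⟨hmap.mp (hX.subset (map_inl_subset_iff_subset_toLeft.mpr subset_rfl)), ?_⟩
    rcases X.toRight.eq_empty_or_nonempty with hB | ⟨w, hw⟩
    · exact .inl hB
    refine .inr (or_iff_not_imp_left.mpr fun hA ↦ ⟨fun a ha a' ha' haa' ↦ ?_, ?_⟩)
    · exact hX.not_adj_of_adj_of_adj (mem_toLeft.mp ha) (mem_toRight.mp hw)
        (mem_toLeft.mp ha') trivial trivial haa'
    · by_contra hB
      obtain ⟨a, ha, a', ha', haa'⟩ := one_lt_card.mp (not_le.mp hA)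
      obtain ⟨b, hb, b', hb', hbb'⟩ := one_lt_card.mp (not_le.mp hB)
      exact hbb' <| Sum.inr_injective <| hX.eq_of_adj_of_adj (mem_toLeft.mp ha)
        (mem_toRight.mp hb) (mem_toLeft.mp ha') (mem_toRight.mp hb') (by simpa using haa')
        trivial trivial trivial trivial
  · rintro ⟨hA, hB | hA₁ | ⟨hA₀, hB⟩⟩
    · rwa [← toLeft_disjSum_toRight (u := X), hB, disjSum_empty, hmap]
    · refine isInducedForest_of_forall_adj (S := X.toLeft.disjSum ∅) (by simpa) ?_
      rintro (a | b) ha (a' | b') ha' hadj <;> simp_all [joinGraph]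
    · refine isInducedForest_of_forall_adj (S := (∅ : Finset V).disjSum X.toRight) (by simpa) ?_
      rintro (a | b) ha (a' | b') ha' hadj
      · exact (hA₀ (mem_toLeft.mpr ha) (mem_toLeft.mpr ha') hadj).elim
      all_goals simp_all [joinGraph]

theorem IsMaximalInducedForest.disjSum_empty {F : Finset V} (hF : IsMaximalInducedForest G F)
    (hind : ¬ IsIndepFinset G F) :
    IsMaximalInducedForest (joinGraph G (⊥ : SimpleGraph W)) (F.disjSum ∅) := by
  refine isMaximalInducedForest_iff.mpr (maximal_of_forall_card_le
    (isInducedForest_joinGraph_bot_iff.mpr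
      ⟨by rw [toLeft_disjSum]; exact hF.1, .inl toRight_disjSum⟩) fun Y hY hXY ↦ ?_)
  have hFY : F ⊆ Y.toLeft := (disjSum_subset.mp hXY).1
  obtain ⟨hA, hB | hA₁ | ⟨hA₀, -⟩⟩ := isInducedForest_joinGraph_bot_iff.mp hY
  · rw [← card_toLeft_add_card_toRight, hB, card_disjSum]
    simpa using card_le_card ((isMaximalInducedForest_iff.mp hF).2 hA hFY)
  · exact (hind ((isIndepFinset_of_card_le_one hA₁).subset hFY)).elim
  · exact (hind (hA₀.subset hFY)).elim

theorem IsMaximalIndepSet.disjSum_singleton {S : Finset V} (hS : IsMaximalIndepSet G S)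
    (hS₂ : 2 ≤ #S) (w : W) :
    IsMaximalInducedForest (joinGraph G (⊥ : SimpleGraph W)) (S.disjSum {w}) := by
  refine isMaximalInducedForest_iff.mpr (maximal_of_forall_card_le
    (isInducedForest_joinGraph_bot_iff.mpr
      ⟨by simpa using hS.1.isInducedForest, .inr (.inr ⟨by simpa using hS.1, by simp⟩)⟩)
    fun Y hY hXY ↦ ?_)
  obtain ⟨hSY, hwY⟩ := disjSum_subset.mp hXY
  obtain ⟨-, hB | hA₁ | ⟨hA₀, hB⟩⟩ := isInducedForest_joinGraph_bot_iff.mp hY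
  · simp [hB] at hwY
  · have := card_le_card hSY
    omega
  · have := card_le_card ((isMaximalIndepSet_iff.mp hS).2 hA₀ hSY)
    rw [← card_toLeft_add_card_toRight, card_disjSum, card_singleton]
    omega

variable [Fintype W]

theorem isMaximalInducedForest_singleton_disjSum_univ (hW : 2 ≤ Fintype.card W) (a : V) :
    IsMaximalInducedForest (joinGraph G (⊥ : SimpleGraph W)) (({a} : Finset V).disjSum univ) := by
  refine isMaximalInducedForest_iff.mpr (maximal_of_forall_card_le
    (isInducedForest_joinGraph_bot_iff.mpr ⟨?_, .inr (.inl (by simp))⟩) fun Y hY hXY ↦ ?_)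
  · simpa using (isIndepFinset_of_card_le_one (G := G) (card_singleton a).le).isInducedForest
  have hB : Y.toRight = univ := univ_subset_iff.mp (disjSum_subset.mp hXY).2
  rw [← card_toLeft_add_card_toRight, card_disjSum, card_singleton, hB]
  rcases (isInducedForest_joinGraph_bot_iff.mp hY).2 with hB' | hA | ⟨-, hB'⟩
  · rw [hB, univ_eq_empty_iff] at hB'
    simp at hW
  · omega
  · rw [hB, card_univ] at hB'
    omega

theorem IsMaximalInducedForest.joinGraph_bot_cases [Nonempty V]
    (hX : IsMaximalInducedForest (joinGraph G (⊥ : SimpleGraph W)) X) :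
    (X.toRight = ∅ ∧ IsMaximalInducedForest G X.toLeft) ∨ (#X.toLeft = 1 ∧ X.toRight = univ) ∨
      (IsMaximalIndepSet G X.toLeft ∧ 2 ≤ #X.toLeft ∧ #X.toRight = 1) := by
  rw [isMaximalInducedForest_iff] at hX
  have hmax : ∀ A B, IsInducedForest (joinGraph G ⊥) (A.disjSum B) → X.toLeft ⊆ A →
      X.toRight ⊆ B → A ⊆ X.toLeft ∧ B ⊆ X.toRight := fun A B h hA hB ↦
    disjSum_subset.mp (hX.2 h (subset_disjSum.mpr ⟨hA, hB⟩))
  obtain ⟨hA, hcases⟩ := isInducedForest_joinGraph_bot_iff.mp hX.1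
  rcases X.toRight.eq_empty_or_nonempty with hB | ⟨w, hw⟩
  · refine .inl ⟨hB, isMaximalInducedForest_iff.mpr ⟨hA, fun A hA' hAA ↦ ?_⟩⟩
    refine (hmax A X.toRight ?_ hAA subset_rfl).1
    exact isInducedForest_joinGraph_bot_iff.mpr ⟨by simpa, .inl (by simpa)⟩
  have hB : X.toRight ≠ ∅ := ne_empty_of_mem hw
  by_cases hA₁ : #X.toLeft ≤ 1
  · refine .inr (.inl ⟨le_antisymm hA₁ (one_le_card.mpr ?_), univ_subset_iff.mp ?_⟩)
    · obtain ⟨v⟩ := ‹Nonempty V›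
      have hv : IsInducedForest (joinGraph G ⊥) (({v} : Finset V).disjSum X.toRight) :=
        isInducedForest_joinGraph_bot_iff.mpr
          ⟨by simpa using (isIndepFinset_of_card_le_one (card_singleton v).le).isInducedForest,
            .inr (.inl (by simp))⟩
      rw [nonempty_iff_ne_empty]
      intro h0
      simpa [h0] using (hmax _ _ hv (h0 ▸ empty_subset _) subset_rfl).1
    · exact (hmax X.toLeft univ (isInducedForest_joinGraph_bot_iff.mpr
        ⟨by simpa, .inr (.inl (by simpa))⟩) subset_rfl (subset_univ _)).2
  obtain ⟨hA₀, hB₁⟩ := (hcases.resolve_left hB).resolve_left hA₁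
  refine .inr (.inr ⟨isMaximalIndepSet_iff.mpr ⟨hA₀, fun A hA' hAA ↦ ?_⟩, by omega,
    le_antisymm hB₁ (one_le_card.mpr ⟨w, hw⟩)⟩)
  refine (hmax A X.toRight ?_ hAA subset_rfl).1
  exact isInducedForest_joinGraph_bot_iff.mpr
    ⟨by simpa using hA'.isInducedForest, .inr (.inr ⟨by simpa, by simpa⟩)⟩

theorem card_eq_of_isMaximalInducedForest_joinGraph_bot [Nonempty V] {k : ℕ}
    (hW : Fintype.card W = k) (hF : ∀ F, IsMaximalInducedForest G F → #F = k + 1)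
    (hS : ∀ S, IsMaximalIndepSet G S → 2 ≤ #S → #S = k)
    (hX : IsMaximalInducedForest (joinGraph G (⊥ : SimpleGraph W)) X) : #X = k + 1 := by
  rw [← card_toLeft_add_card_toRight]
  rcases hX.joinGraph_bot_cases with ⟨hB, hA⟩ | ⟨hA, hB⟩ | ⟨hA, hA₂, hB⟩
  · rw [hF _ hA, hB, card_empty]
  · rw [hA, hB, card_univ, hW, add_comm]
  · rw [hS _ hA hA₂, hB]

end Join

theorem stmt15_general {V W : Type*} [Fintype V] [Fintype W]
    (G : SimpleGraph V) (hGe : ∃ u v, G.Adj u v)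
    (n : ℕ) (hn : 2 ≤ n) (hW : Fintype.card W = n) :
    (WellFCovered (joinGraph G (⊥ : SimpleGraph W)) ↔
      WellFCovered G ∧
      (∀ X Y : Finset V, IsMaximalIndepSet G X → IsMaximalIndepSet G Y →
        2 ≤ X.card → 2 ≤ Y.card → X.card = Y.card) ∧
      (forestNum G = indepNum G + 1 ∧ forestNum G = n + 1)) ∧
    (WellFCovered (joinGraph G (⊥ : SimpleGraph W)) →
      forestNum (joinGraph G (⊥ : SimpleGraph W)) = forestNum G ∧
        forestNum (joinGraph G (⊥ : SimpleGraph W)) = n + 1) := by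
  obtain ⟨u, v, huv⟩ := hGe
  have : Nonempty V := ⟨u⟩
  obtain ⟨w⟩ : Nonempty W := Fintype.card_pos_iff.mp (by omega)
  have hI := isMaximalInducedForest_singleton_disjSum_univ (G := G) (hW ▸ hn) u
  have hcardI : #(({u} : Finset V).disjSum (univ : Finset W)) = n + 1 := by
    rw [card_disjSum, card_singleton, card_univ, hW, add_comm]
  have hforest (hJ : WellFCovered (joinGraph G (⊥ : SimpleGraph W))) (F : Finset V)
      (hF : IsMaximalInducedForest G F) : #F = n + 1 := by
    simpa [hcardI] using hJ _ _ (hF.disjSum_empty (hF.not_isIndepFinset huv)) hI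
  have hindep (hJ : WellFCovered (joinGraph G (⊥ : SimpleGraph W))) (S : Finset V)
      (hS : IsMaximalIndepSet G S) (hS₂ : 2 ≤ #S) : #S = n := by
    simpa [hcardI] using hJ _ _ (hS.disjSum_singleton hS₂ w) hI
  refine ⟨⟨fun hJ ↦ ?_, fun ⟨hG, hG₂, hα, hf⟩ ↦ ?_⟩, fun hJ ↦ ?_⟩
  · have hf := forestNum_eq_of_forall_card_eq (hforest hJ)
    have hα := indepNum_eq_of_forall_card_eq (hindep hJ)
      (exists_isIndepFinset_card_eq_two (by omega))
    refine ⟨fun X Y hX hY ↦ ?_, fun X Y hX hY hX₂ hY₂ ↦ ?_, by omega, hf⟩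
    · rw [hforest hJ X hX, hforest hJ Y hY]
    · rw [hindep hJ X hX hX₂, hindep hJ Y hY hY₂]
  · have hF F (hF : IsMaximalInducedForest G F) : #F = n + 1 := (hG.card_eq_forestNum hF).trans hf
    have hS S (hS : IsMaximalIndepSet G S) (hS₂ : 2 ≤ #S) : #S = n := by
      have := card_eq_indepNum hG₂ (by omega) hS hS₂
      omega
    intro X Y hX hY
    rw [card_eq_of_isMaximalInducedForest_joinGraph_bot hW hF hS hX,
      card_eq_of_isMaximalInducedForest_joinGraph_bot hW hF hS hY]
  · have hfJ := forestNum_eq_of_forall_card_eq fun X hX ↦ (hJ X _ hX hI).trans hcardI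
    exact ⟨hfJ.trans (forestNum_eq_of_forall_card_eq (hforest hJ)).symm, hfJ⟩

/-- Let `G` have at least one edge and let `H` be the edgeless graph on
exactly `n ≥ 2` vertices. Then the join `G ∨ H` is well-f-covered iff (1) `G` is
well-f-covered, (2) any two maximal independent sets of `G` of cardinality at least 2
have the same cardinality, and (3) `f(G) = α(G) + 1 = n + 1`. In that case
`f(G ∨ H) = f(G) = n + 1`. -/
theorem stmt15 {V W : Type*} [Fintype V] [Fintype W] [DecidableEq V] [DecidableEq W]
    (G : SimpleGraph V) (hGe : ∃ u v, G.Adj u v)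
    (n : ℕ) (hn : 2 ≤ n) (hW : Fintype.card W = n) :
    (WellFCovered (joinGraph G (⊥ : SimpleGraph W)) ↔
      WellFCovered G ∧
      (∀ X Y : Finset V, IsMaximalIndepSet G X → IsMaximalIndepSet G Y →
        2 ≤ X.card → 2 ≤ Y.card → X.card = Y.card) ∧
      (forestNum G = indepNum G + 1 ∧ forestNum G = n + 1)) ∧
    (WellFCovered (joinGraph G (⊥ : SimpleGraph W)) →
      forestNum (joinGraph G (⊥ : SimpleGraph W)) = forestNum G ∧
        forestNum (joinGraph G (⊥ : SimpleGraph W)) = n + 1) :=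
  stmt15_general G hGe n hn hW
end
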